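/- arXiv:2605.22578 — 2 statements merged into one kernel-verified Lean document; each statement's English description precedes it below -/
import Mathlib

section
/- For p = 1 and any c > 0, the normalized SOSPA satisfies the triangle inequality: for all finite sequences x, y, z of points in a metric space (E, d), d̄_SOSPA^{(c,1)}(x, y) ≤ d̄_SOSPA^{(c,1)}(x, z) + d̄_SOSPA^{(c,1)}(z, y); together with nonnegativity, symmetry and identity of indiscernibles, d̄_SOSPA^{(c,1)} is a metric on finite point sequences. -/
open scoped BigOperators

/-- A polyline: a finite sequence of points of `E`, given by its length and an
indexing function. -/
def Polyline (E : Type*) : Type _ := Σ n : ℕ, Fin n → E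

/-- An ordered assignment set between `{1,…,n}` and `{1,…,m}`: each first index and each
second index appears at most once, and the pairs respect a strictly increasing order. -/
def IsOrderedAssignment {n m : ℕ} (θ : Finset (Fin n × Fin m)) : Prop :=
  ∀ a ∈ θ, ∀ b ∈ θ, (a.1 < b.1 ↔ a.2 < b.2)

/-- A (not necessarily ordered) assignment set: each first index and each second index
appears at most once. -/
def IsAssignment {n m : ℕ} (θ : Finset (Fin n × Fin m)) : Prop :=
  ∀ a ∈ θ, ∀ b ∈ θ, (a.1 = b.1 ↔ a.2 = b.2)

/-- The assignment cost `C(θ, x, y)` of an assignment set `θ` between polylines `x` and `y`. -/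
noncomputable def cost {E : Type*} [MetricSpace E] (c p : ℝ) (x y : Polyline E)
    (θ : Finset (Fin x.1 × Fin y.1)) : ℝ :=
  (∑ ij ∈ θ, dist (x.2 ij.1) (y.2 ij.2) ^ p
    + c ^ p / 2 * ((x.1 : ℝ) + (y.1 : ℝ) - 2 * (θ.card : ℝ))) ^ (1 / p)

/-- The SOSPA distance: the minimum assignment cost over all ordered assignment sets. -/
noncomputable def dSOSPA {E : Type*} [MetricSpace E] (c p : ℝ) (x y : Polyline E) : ℝ :=
  ⨅ θ : {θ : Finset (Fin x.1 × Fin y.1) // IsOrderedAssignment θ}, cost c p x y θ.1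

/-- The normalized SOSPA, valued in `[0,1]`, with the convention that it is `0` when
both polylines are empty. -/
noncomputable def dSOSPAn {E : Type*} [MetricSpace E] (c p : ℝ) (x y : Polyline E) : ℝ :=
  if x.1 = 0 ∧ y.1 = 0 then 0
  else 2 * dSOSPA c p x y /
    ((c ^ p / 2 * ((x.1 : ℝ) + (y.1 : ℝ))) ^ (1 / p) + dSOSPA c p x y)

/-- The cost of a trace `T` (an ordered assignment set) for the generalized edit distance
with substitution costs `γsub`, deletion costs `γdel`, and insertion costs `γins`. -/
noncomputable def traceCost {n m : ℕ} (γsub : Fin n → Fin m → ℝ) (γdel : Fin n → ℝ)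
    (γins : Fin m → ℝ) (T : Finset (Fin n × Fin m)) : ℝ :=
  ∑ ij ∈ T, γsub ij.1 ij.2
    + ∑ i ∈ Finset.univ.filter (fun i => ∀ j, (i, j) ∉ T), γdel i
    + ∑ j ∈ Finset.univ.filter (fun j => ∀ i, (i, j) ∉ T), γins j

/-- The composition `θ₁ ∘ θ₂` of two assignment sets. -/
def composeAssignment {n k m : ℕ} (θ₁ : Finset (Fin n × Fin k)) (θ₂ : Finset (Fin k × Fin m)) :
    Finset (Fin n × Fin m) :=
  Finset.univ.filter fun im => ∃ j, (im.1, j) ∈ θ₁ ∧ (j, im.2) ∈ θ₂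

/-- The cyclic shift `S_s(x)` of a polyline `x`: the `k`-th point of `S_s(x)` is the
`⟨k+s⟩_{|x|}`-th point of `x`. -/
def shift {E : Type*} (s : ℕ) (x : Polyline E) : Polyline E :=
  ⟨x.1, fun i => x.2 ⟨((i : ℕ) + s) % x.1, Nat.mod_lt _ i.pos⟩⟩

/-- A probabilistic polyline set: a finite indexed family of confidence–polyline pairs,
with confidences in `[0,1]`. -/
structure PPSet (E : Type*) where
  n : ℕ
  r : Fin n → ℝ
  poly : Fin n → Polyline E
  r_nonneg : ∀ i, 0 ≤ r i
  r_le_one : ∀ i, r i ≤ 1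

/-- `R_X`, the total confidence of a probabilistic polyline set. -/
noncomputable def totalR {E : Type*} (X : PPSet E) : ℝ := ∑ i, X.r i

/-- The DAP distance `d_PLD^{(c,p)}` between two probabilistic polyline sets. -/
noncomputable def dPLD {E : Type*} [MetricSpace E] (c p : ℝ) (X Y : PPSet E) : ℝ :=
  (⨅ θ : {θ : Finset (Fin X.n × Fin Y.n) // IsAssignment θ},
    (∑ ij ∈ θ.1, (min (X.r ij.1) (Y.r ij.2) * dSOSPAn c p (X.poly ij.1) (Y.poly ij.2) ^ p
        + |X.r ij.1 - Y.r ij.2| / 2)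
      + (∑ i ∈ Finset.univ.filter (fun i => ∀ j, (i, j) ∉ θ.1), X.r i
          + ∑ j ∈ Finset.univ.filter (fun j => ∀ i, (i, j) ∉ θ.1), Y.r j) / 2)) ^ (1 / p)

/-- The DAP similarity (for `p = 1`). -/
noncomputable def SPLD {E : Type*} [MetricSpace E] (c : ℝ) (X Y : PPSet E) : ℝ :=
  ((totalR X + totalR Y) / 2 - dPLD c 1 X Y) / 2

/-- The normalized DAP, with the convention that it equals `0` when the denominator is `0`. -/
noncomputable def dPLDn {E : Type*} [MetricSpace E] (c p : ℝ) (X Y : PPSet E) : ℝ :=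
  if ((totalR X + totalR Y) / 2) ^ (1 / p) + dPLD c p X Y = 0 then 0
  else 2 * dPLD c p X Y / (((totalR X + totalR Y) / 2) ^ (1 / p) + dPLD c p X Y)

/-- The multiset of confidence–polyline pairs of a probabilistic polyline set. -/
def PPSet.toMultiset {E : Type*} (X : PPSet E) : Multiset (ℝ × Polyline E) :=
  Finset.univ.val.map fun i => (X.r i, X.poly i)
section Aux

open Finset

variable {E : Type*} [MetricSpace E]

lemma orderedAssignment_empty {n m : ℕ} :
    IsOrderedAssignment (∅ : Finset (Fin n × Fin m)) := by
  intro a ha; simp at ha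

lemma IsOrderedAssignment.fst_inj {n m : ℕ} {θ : Finset (Fin n × Fin m)}
    (h : IsOrderedAssignment θ) {a b : Fin n × Fin m} (ha : a ∈ θ) (hb : b ∈ θ)
    (hab : a.1 = b.1) : a = b := by
  have h1 := h a ha b hb
  have h2 := h b hb a ha
  have : a.2 = b.2 := by
    rcases lt_trichotomy a.2 b.2 with h' | h' | h'
    · exact absurd (h1.mpr h') (by rw [hab]; exact lt_irrefl _)
    · exact h'
    · exact absurd (h2.mpr h') (by rw [hab]; exact lt_irrefl _)
  exact Prod.ext hab this

lemma IsOrderedAssignment.snd_inj {n m : ℕ} {θ : Finset (Fin n × Fin m)}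
    (h : IsOrderedAssignment θ) {a b : Fin n × Fin m} (ha : a ∈ θ) (hb : b ∈ θ)
    (hab : a.2 = b.2) : a = b := by
  have h1 := h a ha b hb
  have h2 := h b hb a ha
  have : a.1 = b.1 := by
    rcases lt_trichotomy a.1 b.1 with h' | h' | h'
    · exact absurd (h1.mp h') (by rw [hab]; exact lt_irrefl _)
    · exact h'
    · exact absurd (h2.mp h') (by rw [hab]; exact lt_irrefl _)
  exact Prod.ext this hab

lemma IsOrderedAssignment.card_le_left {n m : ℕ} {θ : Finset (Fin n × Fin m)}
    (h : IsOrderedAssignment θ) : θ.card ≤ n := by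
  classical
  calc θ.card = (θ.image Prod.fst).card :=
        (Finset.card_image_of_injOn fun a ha b hb hab => h.fst_inj ha hb hab).symm
    _ ≤ (Finset.univ : Finset (Fin n)).card := Finset.card_le_card (Finset.subset_univ _)
    _ = n := by simp

lemma IsOrderedAssignment.card_le_right {n m : ℕ} {θ : Finset (Fin n × Fin m)}
    (h : IsOrderedAssignment θ) : θ.card ≤ m := by
  classical
  calc θ.card = (θ.image Prod.snd).card :=
        (Finset.card_image_of_injOn fun a ha b hb hab => h.snd_inj ha hb hab).symm
    _ ≤ (Finset.univ : Finset (Fin m)).card := Finset.card_le_card (Finset.subset_univ _)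
    _ = m := by simp

lemma cost_one (c : ℝ) (x y : Polyline E) (θ : Finset (Fin x.1 × Fin y.1)) :
    cost c 1 x y θ = (∑ ij ∈ θ, dist (x.2 ij.1) (y.2 ij.2))
      + c / 2 * ((x.1 : ℝ) + (y.1 : ℝ) - 2 * (θ.card : ℝ)) := by
  simp [cost, Real.rpow_one]

lemma cost_one_lower (c : ℝ) (hc : 0 < c) (x y : Polyline E)
    {θ : Finset (Fin x.1 × Fin y.1)} (hθ : IsOrderedAssignment θ) :
    c / 2 * ((x.1 : ℝ) + (y.1 : ℝ) - 2 * (min x.1 y.1 : ℕ)) ≤ cost c 1 x y θ := by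
  rw [cost_one]
  have hS : 0 ≤ ∑ ij ∈ θ, dist (x.2 ij.1) (y.2 ij.2) :=
    Finset.sum_nonneg fun _ _ => dist_nonneg
  have hk : θ.card ≤ min x.1 y.1 := le_min hθ.card_le_left hθ.card_le_right
  have hk' : (θ.card : ℝ) ≤ (min x.1 y.1 : ℕ) := by exact_mod_cast hk
  nlinarith

instance instNonemptyOrdered (x y : Polyline E) :
    Nonempty {θ : Finset (Fin x.1 × Fin y.1) // IsOrderedAssignment θ} :=
  ⟨⟨∅, orderedAssignment_empty⟩⟩

lemma dSOSPA_le (c : ℝ) (x y : Polyline E) {θ : Finset (Fin x.1 × Fin y.1)}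
    (hθ : IsOrderedAssignment θ) : dSOSPA c 1 x y ≤ cost c 1 x y θ := by
  unfold dSOSPA
  exact ciInf_le (Set.Finite.bddBelow (Set.finite_range _))
    (⟨θ, hθ⟩ : {θ : Finset (Fin x.1 × Fin y.1) // IsOrderedAssignment θ})

lemma le_dSOSPA {c A : ℝ} {x y : Polyline E}
    (h : ∀ θ : Finset (Fin x.1 × Fin y.1), IsOrderedAssignment θ → A ≤ cost c 1 x y θ) :
    A ≤ dSOSPA c 1 x y := by
  unfold dSOSPA
  exact le_ciInf fun θ => h θ.1 θ.2

lemma dSOSPA_exists_min (c : ℝ) (x y : Polyline E) :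
    ∃ θ : Finset (Fin x.1 × Fin y.1), IsOrderedAssignment θ ∧
      dSOSPA c 1 x y = cost c 1 x y θ := by
  obtain ⟨θ0, hθ0⟩ := Finite.exists_min
    (fun θ : {θ : Finset (Fin x.1 × Fin y.1) // IsOrderedAssignment θ} => cost c 1 x y θ.1)
  exact ⟨θ0.1, θ0.2, le_antisymm (dSOSPA_le c x y θ0.2)
    (le_dSOSPA fun θ hθ => hθ0 ⟨θ, hθ⟩)⟩

lemma dSOSPA_nonneg (c : ℝ) (hc : 0 < c) (x y : Polyline E) : 0 ≤ dSOSPA c 1 x y := by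
  refine le_dSOSPA fun θ hθ => le_trans ?_ (cost_one_lower c hc x y hθ)
  have : (0:ℝ) ≤ (x.1 : ℝ) + (y.1 : ℝ) - 2 * (min x.1 y.1 : ℕ) := by
    have h1 : (min x.1 y.1 : ℕ) ≤ x.1 := min_le_left _ _
    have h2 : (min x.1 y.1 : ℕ) ≤ y.1 := min_le_right _ _
    have h1' : ((min x.1 y.1 : ℕ) : ℝ) ≤ (x.1 : ℝ) := by exact_mod_cast h1
    have h2' : ((min x.1 y.1 : ℕ) : ℝ) ≤ (y.1 : ℝ) := by exact_mod_cast h2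
    linarith
  nlinarith

lemma dSOSPA_le_K (c : ℝ) (x y : Polyline E) :
    dSOSPA c 1 x y ≤ c / 2 * ((x.1 : ℝ) + (y.1 : ℝ)) := by
  have := dSOSPA_le c x y (θ := ∅) orderedAssignment_empty
  rw [cost_one] at this
  simpa using this

lemma dSOSPA_lower_left (c : ℝ) (hc : 0 < c) (x y : Polyline E) :
    c / 2 * ((x.1 : ℝ) - (y.1 : ℝ)) ≤ dSOSPA c 1 x y := by
  refine le_dSOSPA fun θ hθ => le_trans ?_ (cost_one_lower c hc x y hθ)
  have h2 : ((min x.1 y.1 : ℕ) : ℝ) ≤ (y.1 : ℝ) := by exact_mod_cast min_le_right x.1 y.1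
  nlinarith

lemma dSOSPA_lower_right (c : ℝ) (hc : 0 < c) (x y : Polyline E) :
    c / 2 * ((y.1 : ℝ) - (x.1 : ℝ)) ≤ dSOSPA c 1 x y := by
  refine le_dSOSPA fun θ hθ => le_trans ?_ (cost_one_lower c hc x y hθ)
  have h1 : ((min x.1 y.1 : ℕ) : ℝ) ≤ (x.1 : ℝ) := by exact_mod_cast min_le_left x.1 y.1
  nlinarith

lemma dSOSPA_comm (c : ℝ) (x y : Polyline E) : dSOSPA c 1 x y = dSOSPA c 1 y x := by
  classical
  have key : ∀ (u v : Polyline E), dSOSPA c 1 u v ≤ dSOSPA c 1 v u := by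
    intro u v
    obtain ⟨θ, hθ, hmin⟩ := dSOSPA_exists_min c v u
    rw [hmin]
    have hθ' : IsOrderedAssignment (θ.image Prod.swap) := by
      intro a ha b hb
      simp only [Finset.mem_image] at ha hb
      obtain ⟨a', ha', rfl⟩ := ha
      obtain ⟨b', hb', rfl⟩ := hb
      exact (hθ a' ha' b' hb').symm
    refine le_trans (dSOSPA_le c u v hθ') (le_of_eq ?_)
    rw [cost_one, cost_one]
    have hinj : Set.InjOn Prod.swap (θ : Set (Fin v.1 × Fin u.1)) :=
      fun a _ b _ hab => Prod.swap_injective hab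
    rw [Finset.card_image_of_injOn hinj,
      Finset.sum_image (fun a ha b hb hab => Prod.swap_injective hab)]
    simp only [Prod.fst_swap, Prod.snd_swap]
    rw [Finset.sum_congr rfl fun ij _ => dist_comm (u.2 ij.2) (v.2 ij.1)]
    ring
  exact le_antisymm (key x y) (key y x)

lemma mem_composeAssignment {n k m : ℕ} {θ₁ : Finset (Fin n × Fin k)}
    {θ₂ : Finset (Fin k × Fin m)} {a : Fin n × Fin m} :
    a ∈ composeAssignment θ₁ θ₂ ↔ ∃ j, (a.1, j) ∈ θ₁ ∧ (j, a.2) ∈ θ₂ := by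
  simp [composeAssignment]

lemma dSOSPA_triangle (c : ℝ) (hc : 0 < c) (x z y : Polyline E) :
    dSOSPA c 1 x y ≤ dSOSPA c 1 x z + dSOSPA c 1 z y := by
  classical
  obtain ⟨θ₁, hθ₁, h1⟩ := dSOSPA_exists_min c x z
  obtain ⟨θ₂, hθ₂, h2⟩ := dSOSPA_exists_min c z y
  set θ := composeAssignment θ₁ θ₂ with hθdef
  set P : Finset ((Fin x.1 × Fin z.1) × (Fin z.1 × Fin y.1)) :=
    (θ₁ ×ˢ θ₂).filter (fun q => q.1.2 = q.2.1) with hPdef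
  have hPmem : ∀ q ∈ P, q.1 ∈ θ₁ ∧ q.2 ∈ θ₂ ∧ q.1.2 = q.2.1 := by
    intro q hq
    simp only [hPdef, Finset.mem_filter, Finset.mem_product] at hq
    exact ⟨hq.1.1, hq.1.2, hq.2⟩
  -- θ is the image of P
  have himg : θ = P.image (fun q => (q.1.1, q.2.2)) := by
    ext a
    rw [mem_composeAssignment]
    simp only [Finset.mem_image, hPdef, Finset.mem_filter, Finset.mem_product]
    constructor
    · rintro ⟨j, hj1, hj2⟩
      exact ⟨((a.1, j), (j, a.2)), ⟨⟨hj1, hj2⟩, rfl⟩, rfl⟩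
    · rintro ⟨q, ⟨⟨hq1, hq2⟩, hq3⟩, rfl⟩
      exact ⟨q.1.2, by simpa using hq1, by rw [hq3]; simpa using hq2⟩
  have hinjP : Set.InjOn (fun q : (Fin x.1 × Fin z.1) × (Fin z.1 × Fin y.1) => (q.1.1, q.2.2))
      (P : Set _) := by
    intro q hq q' hq' h
    obtain ⟨hq1, hq2, hq3⟩ := hPmem q hq
    obtain ⟨hq1', hq2', hq3'⟩ := hPmem q' hq'
    have h' : (q.1.1, q.2.2) = (q'.1.1, q'.2.2) := h
    have e1 : q.1.1 = q'.1.1 := (Prod.ext_iff.mp h').1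
    have e2 : q.2.2 = q'.2.2 := (Prod.ext_iff.mp h').2
    have e3 : q.1 = q'.1 := hθ₁.fst_inj hq1 hq1' e1
    have e4 : q.2 = q'.2 := hθ₂.snd_inj hq2 hq2' e2
    exact Prod.ext e3 e4
  -- θ is an ordered assignment
  have hθord : IsOrderedAssignment θ := by
    intro a ha b hb
    obtain ⟨j, hj1, hj2⟩ := mem_composeAssignment.mp ha
    obtain ⟨j', hj1', hj2'⟩ := mem_composeAssignment.mp hb
    have e1 := hθ₁ (a.1, j) hj1 (b.1, j') hj1'
    have e2 := hθ₂ (j, a.2) hj2 (j', b.2) hj2'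
    simpa using e1.trans e2
  -- the sum bound
  have hsum : (∑ ij ∈ θ, dist (x.2 ij.1) (y.2 ij.2)) ≤
      (∑ ij ∈ θ₁, dist (x.2 ij.1) (z.2 ij.2)) + ∑ ij ∈ θ₂, dist (z.2 ij.1) (y.2 ij.2) := by
    have e0 : (∑ ij ∈ θ, dist (x.2 ij.1) (y.2 ij.2)) =
        ∑ q ∈ P, dist (x.2 q.1.1) (y.2 q.2.2) := by
      rw [himg, Finset.sum_image (fun a ha b hb hab => hinjP ha hb hab)]
    have e1 : ∀ q ∈ P, dist (x.2 q.1.1) (y.2 q.2.2) ≤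
        dist (x.2 q.1.1) (z.2 q.1.2) + dist (z.2 q.2.1) (y.2 q.2.2) := by
      intro q hq
      obtain ⟨_, _, hq3⟩ := hPmem q hq
      rw [hq3]
      exact dist_triangle _ _ _
    have e2 : (∑ q ∈ P, dist (x.2 q.1.1) (z.2 q.1.2)) ≤
        ∑ ij ∈ θ₁, dist (x.2 ij.1) (z.2 ij.2) := by
      have hinj1 : Set.InjOn (Prod.fst : ((Fin x.1 × Fin z.1) × (Fin z.1 × Fin y.1)) → _)
          (P : Set ((Fin x.1 × Fin z.1) × (Fin z.1 × Fin y.1))) := by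
        intro q hq q' hq' h
        obtain ⟨hq1, hq2, hq3⟩ := hPmem q hq
        obtain ⟨hq1', hq2', hq3'⟩ := hPmem q' hq'
        have e4 : q.2 = q'.2 := by
          apply hθ₂.fst_inj hq2 hq2'
          rw [← hq3, ← hq3', h]
        exact Prod.ext h e4
      have : (∑ q ∈ P, dist (x.2 q.1.1) (z.2 q.1.2)) =
          ∑ b ∈ P.image Prod.fst, dist (x.2 b.1) (z.2 b.2) := by
        rw [Finset.sum_image (fun a ha b hb hab => hinj1 ha hb hab)]
      rw [this]
      refine Finset.sum_le_sum_of_subset_of_nonneg ?_ (fun _ _ _ => dist_nonneg)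
      intro b hb
      obtain ⟨q, hq, rfl⟩ := Finset.mem_image.mp hb
      exact (hPmem q hq).1
    have e3 : (∑ q ∈ P, dist (z.2 q.2.1) (y.2 q.2.2)) ≤
        ∑ ij ∈ θ₂, dist (z.2 ij.1) (y.2 ij.2) := by
      have hinj2 : Set.InjOn (Prod.snd : ((Fin x.1 × Fin z.1) × (Fin z.1 × Fin y.1)) → _)
          (P : Set ((Fin x.1 × Fin z.1) × (Fin z.1 × Fin y.1))) := by
        intro q hq q' hq' h
        obtain ⟨hq1, hq2, hq3⟩ := hPmem q hq
        obtain ⟨hq1', hq2', hq3'⟩ := hPmem q' hq'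
        have e4 : q.1 = q'.1 := by
          apply hθ₁.snd_inj hq1 hq1'
          rw [hq3, hq3', h]
        exact Prod.ext e4 h
      have : (∑ q ∈ P, dist (z.2 q.2.1) (y.2 q.2.2)) =
          ∑ b ∈ P.image Prod.snd, dist (z.2 b.1) (y.2 b.2) := by
        rw [Finset.sum_image (fun a ha b hb hab => hinj2 ha hb hab)]
      rw [this]
      refine Finset.sum_le_sum_of_subset_of_nonneg ?_ (fun _ _ _ => dist_nonneg)
      intro b hb
      obtain ⟨q, hq, rfl⟩ := Finset.mem_image.mp hb
      exact (hPmem q hq).2.1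
    calc (∑ ij ∈ θ, dist (x.2 ij.1) (y.2 ij.2))
        = ∑ q ∈ P, dist (x.2 q.1.1) (y.2 q.2.2) := e0
      _ ≤ ∑ q ∈ P, (dist (x.2 q.1.1) (z.2 q.1.2) + dist (z.2 q.2.1) (y.2 q.2.2)) :=
          Finset.sum_le_sum e1
      _ = (∑ q ∈ P, dist (x.2 q.1.1) (z.2 q.1.2)) + ∑ q ∈ P, dist (z.2 q.2.1) (y.2 q.2.2) :=
          Finset.sum_add_distrib
      _ ≤ _ := add_le_add e2 e3
  -- the cardinality bound
  have hcard : θ₁.card + θ₂.card ≤ z.1 + θ.card := by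
    set J₁ := θ₁.image Prod.snd with hJ₁
    set J₂ := θ₂.image Prod.fst with hJ₂
    have c1 : J₁.card = θ₁.card :=
      Finset.card_image_of_injOn fun a ha b hb hab => hθ₁.snd_inj ha hb hab
    have c2 : J₂.card = θ₂.card :=
      Finset.card_image_of_injOn fun a ha b hb hab => hθ₂.fst_inj ha hb hab
    have himg2 : P.image (fun q => q.1.2) = J₁ ∩ J₂ := by
      ext j
      simp only [Finset.mem_image, Finset.mem_inter, hJ₁, hJ₂]
      constructor
      · rintro ⟨q, hq, rfl⟩
        obtain ⟨hq1, hq2, hq3⟩ := hPmem q hq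
        exact ⟨⟨q.1, hq1, rfl⟩, ⟨q.2, hq2, hq3.symm⟩⟩
      · rintro ⟨⟨a, ha, rfl⟩, ⟨b, hb, hb2⟩⟩
        refine ⟨(a, b), ?_, rfl⟩
        simp only [hPdef, Finset.mem_filter, Finset.mem_product]
        exact ⟨⟨ha, hb⟩, hb2.symm⟩
    have hinj3 : Set.InjOn (fun q : (Fin x.1 × Fin z.1) × (Fin z.1 × Fin y.1) => q.1.2)
        (P : Set _) := by
      intro q hq q' hq' h
      obtain ⟨hq1, hq2, hq3⟩ := hPmem q hq
      obtain ⟨hq1', hq2', hq3'⟩ := hPmem q' hq'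
      have e3 : q.1 = q'.1 := hθ₁.snd_inj hq1 hq1' h
      have e4 : q.2 = q'.2 := by
        apply hθ₂.fst_inj hq2 hq2'
        rw [← hq3, ← hq3']
        exact h
      exact Prod.ext e3 e4
    have cP : P.card = (J₁ ∩ J₂).card := by
      rw [← himg2, Finset.card_image_of_injOn hinj3]
    have cθ : θ.card = P.card := by
      rw [himg, Finset.card_image_of_injOn hinjP]
    have hun : (J₁ ∪ J₂).card ≤ z.1 := by
      calc (J₁ ∪ J₂).card ≤ (Finset.univ : Finset (Fin z.1)).card :=
            Finset.card_le_card (Finset.subset_univ _)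
        _ = z.1 := by simp
    have := Finset.card_union_add_card_inter J₁ J₂
    omega
  -- conclude
  rw [h1, h2]
  refine le_trans (dSOSPA_le c x y hθord) ?_
  rw [cost_one, cost_one, cost_one]
  have hcard' : (θ₁.card : ℝ) + (θ₂.card : ℝ) ≤ (z.1 : ℝ) + (θ.card : ℝ) := by
    exact_mod_cast hcard
  nlinarith

lemma dSOSPA_eq_zero_iff (c : ℝ) (hc : 0 < c) (x y : Polyline E) :
    dSOSPA c 1 x y = 0 ↔
      ∃ h : x.1 = y.1, ∀ i : Fin x.1, x.2 i = y.2 (Fin.cast h i) := by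
  classical
  constructor
  · intro h0
    obtain ⟨θ, hθ, hmin⟩ := dSOSPA_exists_min c x y
    rw [h0] at hmin
    rw [cost_one] at hmin
    have hS : 0 ≤ ∑ ij ∈ θ, dist (x.2 ij.1) (y.2 ij.2) :=
      Finset.sum_nonneg fun _ _ => dist_nonneg
    have hk1 : θ.card ≤ x.1 := hθ.card_le_left
    have hk2 : θ.card ≤ y.1 := hθ.card_le_right
    have hk1' : (θ.card : ℝ) ≤ (x.1 : ℝ) := by exact_mod_cast hk1
    have hk2' : (θ.card : ℝ) ≤ (y.1 : ℝ) := by exact_mod_cast hk2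
    have hT : 0 ≤ c / 2 * ((x.1 : ℝ) + (y.1 : ℝ) - 2 * (θ.card : ℝ)) := by nlinarith
    have hSzero : (∑ ij ∈ θ, dist (x.2 ij.1) (y.2 ij.2)) = 0 := by linarith
    have hTzero : (x.1 : ℝ) + (y.1 : ℝ) - 2 * (θ.card : ℝ) = 0 := by
      by_contra hne
      have : 0 < (x.1 : ℝ) + (y.1 : ℝ) - 2 * (θ.card : ℝ) := lt_of_le_of_ne (by nlinarith) (Ne.symm hne)
      nlinarith
    have hnat : x.1 + y.1 = 2 * θ.card := by exact_mod_cast sub_eq_zero.mp hTzero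
    have hkn : θ.card = x.1 := by omega
    have hkm : θ.card = y.1 := by omega
    have h : x.1 = y.1 := by omega
    refine ⟨h, fun i => ?_⟩
    -- fst is surjective on θ
    have hfull : θ.image Prod.fst = (Finset.univ : Finset (Fin x.1)) := by
      apply Finset.eq_univ_of_card
      rw [Finset.card_image_of_injOn fun a ha b hb hab => hθ.fst_inj ha hb hab]
      simpa using hkn
    have hi : i ∈ θ.image Prod.fst := by rw [hfull]; exact Finset.mem_univ i
    obtain ⟨a, ha, ha1⟩ := Finset.mem_image.mp hi
    -- counting argument : (a.1 : ℕ) = (a.2 : ℕ)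
    have hAB : θ.filter (fun b => b.1 < a.1) = θ.filter (fun b => b.2 < a.2) :=
      Finset.filter_congr fun b hb => hθ b hb a ha
    have cardA : (θ.filter (fun b => b.1 < a.1)).card = (a.1 : ℕ) := by
      have himgA : (θ.filter (fun b => b.1 < a.1)).image Prod.fst = Finset.Iio a.1 := by
        ext i'
        simp only [Finset.mem_image, Finset.mem_filter, Finset.mem_Iio]
        constructor
        · rintro ⟨b, ⟨hb, hb2⟩, rfl⟩; exact hb2
        · intro hi'
          have : i' ∈ θ.image Prod.fst := by rw [hfull]; exact Finset.mem_univ i'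
          obtain ⟨b, hb, rfl⟩ := Finset.mem_image.mp this
          exact ⟨b, ⟨hb, hi'⟩, rfl⟩
      have : (θ.filter (fun b => b.1 < a.1)).card
          = ((θ.filter (fun b => b.1 < a.1)).image Prod.fst).card := by
        rw [Finset.card_image_of_injOn fun p hp q hq hpq =>
          hθ.fst_inj (Finset.mem_of_mem_filter p hp) (Finset.mem_of_mem_filter q hq) hpq]
      rw [this, himgA, Fin.card_Iio]
    have hfull2 : θ.image Prod.snd = (Finset.univ : Finset (Fin y.1)) := by
      apply Finset.eq_univ_of_card
      rw [Finset.card_image_of_injOn fun p hp q hq hpq => hθ.snd_inj hp hq hpq]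
      simpa using hkm
    have cardB : (θ.filter (fun b => b.2 < a.2)).card = (a.2 : ℕ) := by
      have himgB : (θ.filter (fun b => b.2 < a.2)).image Prod.snd = Finset.Iio a.2 := by
        ext j'
        simp only [Finset.mem_image, Finset.mem_filter, Finset.mem_Iio]
        constructor
        · rintro ⟨b, ⟨hb, hb2⟩, rfl⟩; exact hb2
        · intro hj'
          have : j' ∈ θ.image Prod.snd := by rw [hfull2]; exact Finset.mem_univ j'
          obtain ⟨b, hb, rfl⟩ := Finset.mem_image.mp this
          exact ⟨b, ⟨hb, hj'⟩, rfl⟩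
      have : (θ.filter (fun b => b.2 < a.2)).card
          = ((θ.filter (fun b => b.2 < a.2)).image Prod.snd).card := by
        rw [Finset.card_image_of_injOn fun p hp q hq hpq =>
          hθ.snd_inj (Finset.mem_of_mem_filter p hp) (Finset.mem_of_mem_filter q hq) hpq]
      rw [this, himgB, Fin.card_Iio]
    have hval : (a.1 : ℕ) = (a.2 : ℕ) := by rw [← cardA, ← cardB, hAB]
    have ha2 : a.2 = Fin.cast h i := by
      apply Fin.ext
      simp only [Fin.coe_cast]
      rw [← hval, ha1]
    have hdist : dist (x.2 a.1) (y.2 a.2) = 0 :=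
      (Finset.sum_eq_zero_iff_of_nonneg fun _ _ => dist_nonneg).mp hSzero a ha
    rw [← ha2, ← ha1]
    exact dist_eq_zero.mp hdist
  · rintro ⟨h, hp⟩
    refine le_antisymm ?_ (dSOSPA_nonneg c hc x y)
    have hθord : IsOrderedAssignment
        (Finset.univ.image (fun i : Fin x.1 => (i, Fin.cast h i))) := by
      intro a ha b hb
      simp only [Finset.mem_image, Finset.mem_univ, true_and] at ha hb
      obtain ⟨i, rfl⟩ := ha
      obtain ⟨i', rfl⟩ := hb
      simp only [Fin.lt_def, Fin.coe_cast]
    set θ : Finset (Fin x.1 × Fin y.1) :=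
      Finset.univ.image (fun i : Fin x.1 => (i, Fin.cast h i)) with hθdef
    have := dSOSPA_le c x y hθord
    rw [cost_one] at this
    have hcard : θ.card = x.1 := by
      rw [hθdef, Finset.card_image_of_injective _ (fun i i' hii => by
        simpa using congrArg Prod.fst hii)]
      simp
    have hSzero : (∑ ij ∈ θ, dist (x.2 ij.1) (y.2 ij.2)) = 0 := by
      apply Finset.sum_eq_zero
      intro ij hij
      simp only [hθdef, Finset.mem_image, Finset.mem_univ, true_and] at hij
      obtain ⟨i, rfl⟩ := hij
      simp [hp i]
    rw [hSzero, hcard] at this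
    have hm : (y.1 : ℝ) = (x.1 : ℝ) := by exact_mod_cast congrArg Nat.cast h.symm
    rw [hm] at this
    linarith [this]

lemma dSOSPAn_one (c : ℝ) (x y : Polyline E) :
    dSOSPAn c 1 x y = if x.1 = 0 ∧ y.1 = 0 then 0
      else 2 * dSOSPA c 1 x y / (c / 2 * ((x.1 : ℝ) + (y.1 : ℝ)) + dSOSPA c 1 x y) := by
  simp [dSOSPAn, Real.rpow_one]

lemma dSOSPAn_nonneg (c : ℝ) (hc : 0 < c) (x y : Polyline E) : 0 ≤ dSOSPAn c 1 x y := by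
  rw [dSOSPAn_one]
  split
  · exact le_rfl
  · apply div_nonneg
    · linarith [dSOSPA_nonneg c hc x y]
    · have := dSOSPA_nonneg c hc x y
      have hxy : (0:ℝ) ≤ (x.1 : ℝ) + (y.1 : ℝ) := by positivity
      nlinarith

lemma K_pos {c : ℝ} (hc : 0 < c) {x y : Polyline E} (h : ¬(x.1 = 0 ∧ y.1 = 0)) :
    0 < c / 2 * ((x.1 : ℝ) + (y.1 : ℝ)) := by
  have h' : x.1 ≠ 0 ∨ y.1 ≠ 0 := by tauto
  have hn : 0 < x.1 + y.1 := by omega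
  have hn' : (0:ℝ) < (x.1 : ℝ) + (y.1 : ℝ) := by exact_mod_cast hn
  exact mul_pos (by linarith) hn'

lemma dSOSPA_left_empty (c : ℝ) (hc : 0 < c) (x y : Polyline E) (hx : x.1 = 0) :
    dSOSPA c 1 x y = c / 2 * ((x.1 : ℝ) + (y.1 : ℝ)) := by
  refine le_antisymm (dSOSPA_le_K c x y) ?_
  have hx0 : (x.1 : ℝ) = 0 := by rw [hx]; simp
  calc c / 2 * ((x.1 : ℝ) + (y.1 : ℝ)) = c / 2 * ((y.1 : ℝ) - (x.1 : ℝ)) := by rw [hx0]; ring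
    _ ≤ dSOSPA c 1 x y := dSOSPA_lower_right c hc x y

lemma dSOSPAn_comm' (c : ℝ) (x y : Polyline E) : dSOSPAn c 1 x y = dSOSPAn c 1 y x := by
  rw [dSOSPAn_one, dSOSPAn_one, dSOSPA_comm c x y]
  by_cases h : x.1 = 0 ∧ y.1 = 0
  · rw [if_pos h, if_pos ⟨h.2, h.1⟩]
  · rw [if_neg h, if_neg (fun h' => h ⟨h'.2, h'.1⟩), add_comm (x.1 : ℝ)]

lemma dSOSPAn_eq_one_left (c : ℝ) (hc : 0 < c) (x y : Polyline E)
    (hx : x.1 = 0) (hy : y.1 ≠ 0) : dSOSPAn c 1 x y = 1 := by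
  rw [dSOSPAn_one, if_neg (fun h => hy h.2), dSOSPA_left_empty c hc x y hx]
  have hK : 0 < c / 2 * ((x.1 : ℝ) + (y.1 : ℝ)) := K_pos hc (fun h => hy h.2)
  rw [show 2 * (c / 2 * ((x.1 : ℝ) + (y.1 : ℝ)))
      = c / 2 * ((x.1 : ℝ) + (y.1 : ℝ)) + c / 2 * ((x.1 : ℝ) + (y.1 : ℝ)) from by ring]
  exact div_self (by linarith)

lemma dSOSPAn_eq_one_right (c : ℝ) (hc : 0 < c) (x y : Polyline E)
    (hy : y.1 = 0) (hx : x.1 ≠ 0) : dSOSPAn c 1 x y = 1 := by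
  rw [dSOSPAn_comm' c x y]
  exact dSOSPAn_eq_one_left c hc y x hy hx

lemma steinhaus {a b e u v w : ℝ} (hu : 0 ≤ u) (hv : 0 ≤ v) (hw : 0 ≤ w)
    (hab : 0 < a + b) (hd2 : 0 < a + e + v) (hd3 : 0 < e + b + w)
    (htri : u ≤ v + w) (h1 : e ≤ a + v) (h2 : e ≤ b + w) :
    2 * u / (a + b + u) ≤ 2 * v / (a + e + v) + 2 * w / (e + b + w) := by
  have habu : 0 < a + b + u := by linarith
  have habvw : 0 < a + b + (v + w) := by linarith
  have step1 : 2 * u / (a + b + u) ≤ 2 * (v + w) / (a + b + (v + w)) := by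
    rw [div_le_div_iff₀ habu habvw]
    nlinarith
  have split : 2 * (v + w) / (a + b + (v + w)) =
      2 * v / (a + b + (v + w)) + 2 * w / (a + b + (v + w)) := by
    field_simp
  have step2 : 2 * v / (a + b + (v + w)) ≤ 2 * v / (a + e + v) := by
    apply div_le_div_of_nonneg_left (by linarith) hd2 (by linarith)
  have step3 : 2 * w / (a + b + (v + w)) ≤ 2 * w / (e + b + w) := by
    apply div_le_div_of_nonneg_left (by linarith) hd3 (by linarith)
  calc 2 * u / (a + b + u) ≤ 2 * (v + w) / (a + b + (v + w)) := step1
    _ = 2 * v / (a + b + (v + w)) + 2 * w / (a + b + (v + w)) := split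
    _ ≤ 2 * v / (a + e + v) + 2 * w / (e + b + w) := add_le_add step2 step3

end Aux

/-- For `p = 1` and any `c > 0`, the normalized SOSPA satisfies the
triangle inequality; together with nonnegativity, symmetry and identity of
indiscernibles, `d̄_SOSPA^{(c,1)}` is a metric on finite point sequences. -/
theorem dSOSPAn_isMetric {E : Type*} [MetricSpace E] (c : ℝ) (hc : 0 < c) :
    ∀ x y z : Polyline E,
      dSOSPAn c 1 x y ≤ dSOSPAn c 1 x z + dSOSPAn c 1 z y ∧
      0 ≤ dSOSPAn c 1 x y ∧
      dSOSPAn c 1 x y = dSOSPAn c 1 y x ∧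
      (dSOSPAn c 1 x y = 0 ↔
        ∃ h : x.1 = y.1, ∀ i : Fin x.1, x.2 i = y.2 (Fin.cast h i)) := by
  intro x y z
  refine ⟨?_, dSOSPAn_nonneg c hc x y, dSOSPAn_comm' c x y, ?_⟩
  · -- triangle inequality
    by_cases hxy : x.1 = 0 ∧ y.1 = 0
    · rw [dSOSPAn_one c x y, if_pos hxy]
      linarith [dSOSPAn_nonneg c hc x z, dSOSPAn_nonneg c hc z y]
    by_cases hxz : x.1 = 0 ∧ z.1 = 0
    · have hy : y.1 ≠ 0 := fun h => hxy ⟨hxz.1, h⟩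
      rw [dSOSPAn_eq_one_left c hc x y hxz.1 hy, dSOSPAn_eq_one_left c hc z y hxz.2 hy]
      linarith [dSOSPAn_nonneg c hc x z]
    by_cases hzy : z.1 = 0 ∧ y.1 = 0
    · have hx : x.1 ≠ 0 := fun h => hxy ⟨h, hzy.2⟩
      rw [dSOSPAn_eq_one_right c hc x y hzy.2 hx, dSOSPAn_eq_one_right c hc x z hzy.1 hx]
      linarith [dSOSPAn_nonneg c hc z y]
    · rw [dSOSPAn_one c x y, dSOSPAn_one c x z, dSOSPAn_one c z y,
        if_neg hxy, if_neg hxz, if_neg hzy]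
      have hab : 0 < c / 2 * ((x.1 : ℝ) + (y.1 : ℝ)) := K_pos hc hxy
      have hae : 0 < c / 2 * ((x.1 : ℝ) + (z.1 : ℝ)) := K_pos hc hxz
      have heb : 0 < c / 2 * ((z.1 : ℝ) + (y.1 : ℝ)) := K_pos hc hzy
      have hv := dSOSPA_nonneg c hc x z
      have hw := dSOSPA_nonneg c hc z y
      rw [show c / 2 * ((x.1 : ℝ) + (y.1 : ℝ))
          = c / 2 * (x.1 : ℝ) + c / 2 * (y.1 : ℝ) from by ring,
        show c / 2 * ((x.1 : ℝ) + (z.1 : ℝ))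
          = c / 2 * (x.1 : ℝ) + c / 2 * (z.1 : ℝ) from by ring,
        show c / 2 * ((z.1 : ℝ) + (y.1 : ℝ))
          = c / 2 * (z.1 : ℝ) + c / 2 * (y.1 : ℝ) from by ring]
      refine steinhaus (dSOSPA_nonneg c hc x y) hv hw (by linarith) (by linarith)
        (by linarith) (dSOSPA_triangle c hc x z y) ?_ ?_
      · have := dSOSPA_lower_right c hc x z
        linarith
      · have := dSOSPA_lower_left c hc z y
        linarith
  · -- identity of indiscernibles
    rw [dSOSPAn_one]
    by_cases h0 : x.1 = 0 ∧ y.1 = 0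
    · rw [if_pos h0]
      constructor
      · intro _
        refine ⟨by omega, fun i => absurd i.isLt (by omega)⟩
      · intro _
        rfl
    · rw [if_neg h0]
      have hden : 0 < c / 2 * ((x.1 : ℝ) + (y.1 : ℝ)) + dSOSPA c 1 x y := by
        linarith [K_pos hc h0, dSOSPA_nonneg c hc x y]
      rw [div_eq_zero_iff]
      constructor
      · rintro (h | h)
        · have hD : dSOSPA c 1 x y = 0 := by linarith
          exact (dSOSPA_eq_zero_iff c hc x y).mp hD
        · exact absurd h (ne_of_gt hden)
      · intro hxy2
        left
        rw [(dSOSPA_eq_zero_iff c hc x y).mpr hxy2]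
        ring
end

section
/- For any finite sequences x, y, z of points in a metric space (E, d), any c > 0 and any 1 ≤ p < ∞, there exists an ordered assignment set θ_{x,y} ∈ Γ^o_{|x|,|y|} whose assignment cost satisfies C(θ_{x,y}, x, y) ≤ d_SOSPA^{(c,p)}(x, z) + d_SOSPA^{(c,p)}(z, y). -/
open scoped BigOperators

section TriangleAux

open Finset

lemma IsOrderedAssignment.isAssignment {n m : ℕ} {θ : Finset (Fin n × Fin m)}
    (h : IsOrderedAssignment θ) : IsAssignment θ := by
  intro a ha b hb
  constructor
  · intro e
    by_contra hne
    rcases lt_or_gt_of_ne hne with hlt | hlt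
    · exact absurd e (ne_of_lt ((h a ha b hb).mpr hlt))
    · exact absurd e.symm (ne_of_lt ((h b hb a ha).mpr hlt))
  · intro e
    by_contra hne
    rcases lt_or_gt_of_ne hne with hlt | hlt
    · exact absurd e (ne_of_lt ((h a ha b hb).mp hlt))
    · exact absurd e.symm (ne_of_lt ((h b hb a ha).mp hlt))

lemma IsAssignment.left_unique {n m : ℕ} {θ : Finset (Fin n × Fin m)} (h : IsAssignment θ)
    {i : Fin n} {l l' : Fin m} (h1 : (i, l) ∈ θ) (h2 : (i, l') ∈ θ) : l = l' :=
  (h _ h1 _ h2).mp rfl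

lemma IsAssignment.right_unique {n m : ℕ} {θ : Finset (Fin n × Fin m)} (h : IsAssignment θ)
    {i i' : Fin n} {l : Fin m} (h1 : (i, l) ∈ θ) (h2 : (i', l) ∈ θ) : i = i' :=
  (h _ h1 _ h2).mpr rfl

open Classical in
lemma card_matched_fst {n m : ℕ} {θ : Finset (Fin n × Fin m)} (h : IsAssignment θ) :
    (Finset.univ.filter fun i : Fin n => ∃ l, (i, l) ∈ θ).card = θ.card := by
  symm
  refine Finset.card_bij (fun a _ => a.1) ?_ ?_ ?_
  · intro a ha
    simp only [Finset.mem_filter, Finset.mem_univ, true_and]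
    exact ⟨a.2, ha⟩
  · intro a ha b hb e
    exact Prod.ext e ((h a ha b hb).mp e)
  · intro i hi
    simp only [Finset.mem_filter, Finset.mem_univ, true_and] at hi
    obtain ⟨l, hl⟩ := hi
    exact ⟨(i, l), hl, rfl⟩

open Classical in
lemma card_matched_snd {n m : ℕ} {θ : Finset (Fin n × Fin m)} (h : IsAssignment θ) :
    (Finset.univ.filter fun l : Fin m => ∃ i, (i, l) ∈ θ).card = θ.card := by
  symm
  refine Finset.card_bij (fun a _ => a.2) ?_ ?_ ?_
  · intro a ha
    simp only [Finset.mem_filter, Finset.mem_univ, true_and]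
    exact ⟨a.1, ha⟩
  · intro a ha b hb e
    exact Prod.ext ((h a ha b hb).mpr e) e
  · intro l hl
    simp only [Finset.mem_filter, Finset.mem_univ, true_and] at hl
    obtain ⟨i, hi⟩ := hl
    exact ⟨(i, l), hi, rfl⟩

lemma composeAssignment_ordered {n k m : ℕ} {θ1 : Finset (Fin n × Fin k)}
    {θ2 : Finset (Fin k × Fin m)} (h1 : IsOrderedAssignment θ1) (h2 : IsOrderedAssignment θ2) :
    IsOrderedAssignment (composeAssignment θ1 θ2) := by
  intro a ha b hb
  simp only [composeAssignment, Finset.mem_filter, Finset.mem_univ, true_and] at ha hb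
  obtain ⟨la, ha1, ha2⟩ := ha
  obtain ⟨lb, hb1, hb2⟩ := hb
  exact (h1 (a.1, la) ha1 (b.1, lb) hb1).trans (h2 (la, a.2) ha2 (lb, b.2) hb2)

set_option maxHeartbeats 2000000 in
open Classical in
lemma cost_compose_le {E : Type*} [MetricSpace E] (c p : ℝ) (hc : 0 < c) (hp : 1 ≤ p)
    (x y z : Polyline E) (θ1 : Finset (Fin x.1 × Fin z.1)) (h1 : IsOrderedAssignment θ1)
    (θ2 : Finset (Fin z.1 × Fin y.1)) (h2 : IsOrderedAssignment θ2) :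
    cost c p x y (composeAssignment θ1 θ2) ≤ cost c p x z θ1 + cost c p z y θ2 := by
  have ha1 := h1.isAssignment
  have ha2 := h2.isAssignment
  have hp0 : 0 < p := lt_of_lt_of_le one_pos hp
  have hcp : (0:ℝ) < c ^ p / 2 := by positivity
  set κ : ℝ := (c ^ p / 2) ^ (1 / p) with hκ
  have hκ0 : 0 ≤ κ := Real.rpow_nonneg hcp.le _
  have hκp : κ ^ p = c ^ p / 2 := by
    rw [hκ, ← Real.rpow_mul hcp.le, one_div_mul_cancel hp0.ne', Real.rpow_one]
  set θ : Finset (Fin x.1 × Fin y.1) := composeAssignment θ1 θ2 with hθdef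
  have hmemθ : ∀ a : Fin x.1 × Fin y.1, a ∈ θ ↔ ∃ l, (a.1, l) ∈ θ1 ∧ (l, a.2) ∈ θ2 := by
    intro a
    simp [hθdef, composeAssignment]
  set A : Finset (Fin x.1 × Fin z.1 × Fin y.1) :=
    Finset.univ.filter (fun t => (t.1, t.2.1) ∈ θ1 ∧ (t.2.1, t.2.2) ∈ θ2) with hA
  have hmemA : ∀ t : Fin x.1 × Fin z.1 × Fin y.1,
      t ∈ A ↔ (t.1, t.2.1) ∈ θ1 ∧ (t.2.1, t.2.2) ∈ θ2 := by
    intro t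
    simp [hA]
  set B1 : Finset (Fin x.1 × Fin z.1) := θ1.filter (fun a => ¬ ∃ j, (a.2, j) ∈ θ2) with hB1
  set B2 : Finset (Fin z.1 × Fin y.1) := θ2.filter (fun a => ¬ ∃ i, (i, a.1) ∈ θ1) with hB2
  set M1 : Finset (Fin x.1 × Fin z.1) := θ1.filter (fun a => ∃ j, (a.2, j) ∈ θ2) with hM1
  set M2 : Finset (Fin z.1 × Fin y.1) := θ2.filter (fun a => ∃ i, (i, a.1) ∈ θ1) with hM2
  set Ux : Finset (Fin x.1) := Finset.univ.filter (fun i => ¬ ∃ l, (i, l) ∈ θ1) with hUx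
  set Uy : Finset (Fin y.1) := Finset.univ.filter (fun j => ¬ ∃ l, (l, j) ∈ θ2) with hUy
  set Uz1 : Finset (Fin z.1) := Finset.univ.filter (fun l => ¬ ∃ i, (i, l) ∈ θ1) with hUz1
  set Uz2 : Finset (Fin z.1) := Finset.univ.filter (fun l => ¬ ∃ j, (l, j) ∈ θ2) with hUz2
  -- bijection A ≃ θ
  have hmapθ : ∀ t ∈ A, (t.1, t.2.2) ∈ θ := by
    intro t ht
    rw [hmemA] at ht
    exact (hmemθ _).mpr ⟨t.2.1, ht.1, ht.2⟩
  have hinjθ : ∀ t (ht : t ∈ A) t' (ht' : t' ∈ A),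
      ((t.1, t.2.2) : Fin x.1 × Fin y.1) = (t'.1, t'.2.2) → t = t' := by
    intro t ht t' ht' e
    have e1 : t.1 = t'.1 := (Prod.ext_iff.mp e).1
    have e2 : t.2.2 = t'.2.2 := (Prod.ext_iff.mp e).2
    rw [hmemA] at ht ht'
    have h1a : (t'.1, t.2.1) ∈ θ1 := by rw [← e1]; exact ht.1
    have e3 : t.2.1 = t'.2.1 := ha1.left_unique h1a ht'.1
    exact Prod.ext e1 (Prod.ext e3 e2)
  have hsurjθ : ∀ a ∈ θ, ∃ t, ∃ ht : t ∈ A, ((t.1, t.2.2) : Fin x.1 × Fin y.1) = a := by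
    intro a haθ
    obtain ⟨l, hl1, hl2⟩ := (hmemθ a).mp haθ
    exact ⟨(a.1, l, a.2), (hmemA _).mpr ⟨hl1, hl2⟩, rfl⟩
  have cardAθ : A.card = θ.card := Finset.card_bij _ hmapθ hinjθ hsurjθ
  have sumAθ : ∑ t ∈ A, dist (x.2 t.1) (y.2 t.2.2) ^ p
      = ∑ ij ∈ θ, dist (x.2 ij.1) (y.2 ij.2) ^ p :=
    Finset.sum_bij _ hmapθ hinjθ hsurjθ (fun t ht => rfl)
  -- bijection A ≃ M1
  have hmap1 : ∀ t ∈ A, (t.1, t.2.1) ∈ M1 := by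
    intro t ht
    rw [hmemA] at ht
    exact Finset.mem_filter.mpr ⟨ht.1, ⟨t.2.2, ht.2⟩⟩
  have hinj1 : ∀ t (ht : t ∈ A) t' (ht' : t' ∈ A),
      ((t.1, t.2.1) : Fin x.1 × Fin z.1) = (t'.1, t'.2.1) → t = t' := by
    intro t ht t' ht' e
    have e1 : t.1 = t'.1 := (Prod.ext_iff.mp e).1
    have e2 : t.2.1 = t'.2.1 := (Prod.ext_iff.mp e).2
    rw [hmemA] at ht ht'
    have h2a : (t'.2.1, t.2.2) ∈ θ2 := by rw [← e2]; exact ht.2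
    have e3 : t.2.2 = t'.2.2 := ha2.left_unique h2a ht'.2
    exact Prod.ext e1 (Prod.ext e2 e3)
  have hsurj1 : ∀ a ∈ M1, ∃ t, ∃ ht : t ∈ A, ((t.1, t.2.1) : Fin x.1 × Fin z.1) = a := by
    intro a haM
    obtain ⟨haθ1, j, hj⟩ := Finset.mem_filter.mp haM
    exact ⟨(a.1, a.2, j), (hmemA _).mpr ⟨haθ1, hj⟩, rfl⟩
  have cardAM1 : A.card = M1.card := Finset.card_bij _ hmap1 hinj1 hsurj1
  have sumAM1 : ∑ t ∈ A, dist (x.2 t.1) (z.2 t.2.1) ^ p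
      = ∑ a ∈ M1, dist (x.2 a.1) (z.2 a.2) ^ p :=
    Finset.sum_bij _ hmap1 hinj1 hsurj1 (fun t ht => rfl)
  -- bijection A ≃ M2
  have hmap2 : ∀ t ∈ A, t.2 ∈ M2 := by
    intro t ht
    rw [hmemA] at ht
    exact Finset.mem_filter.mpr ⟨ht.2, ⟨t.1, ht.1⟩⟩
  have hinj2 : ∀ t (ht : t ∈ A) t' (ht' : t' ∈ A), t.2 = t'.2 → t = t' := by
    intro t ht t' ht' e
    rw [hmemA] at ht ht'
    have e2 : t.2.1 = t'.2.1 := congrArg Prod.fst e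
    have h1a : (t.1, t'.2.1) ∈ θ1 := by rw [← e2]; exact ht.1
    have e1 : t.1 = t'.1 := ha1.right_unique h1a ht'.1
    exact Prod.ext e1 e
  have hsurj2 : ∀ b ∈ M2, ∃ t, ∃ ht : t ∈ A, t.2 = b := by
    intro b hbM
    obtain ⟨hbθ2, i, hi⟩ := Finset.mem_filter.mp hbM
    exact ⟨(i, b), (hmemA _).mpr ⟨hi, hbθ2⟩, rfl⟩
  have cardAM2 : A.card = M2.card := Finset.card_bij _ hmap2 hinj2 hsurj2
  have sumAM2 : ∑ t ∈ A, dist (z.2 t.2.1) (y.2 t.2.2) ^ p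
      = ∑ a ∈ M2, dist (z.2 a.1) (y.2 a.2) ^ p :=
    Finset.sum_bij _ hmap2 hinj2 hsurj2 (fun t ht => rfl)
  -- counting
  have splitθ1card : M1.card + B1.card = θ1.card :=
    Finset.card_filter_add_card_filter_not _
  have splitθ2card : M2.card + B2.card = θ2.card :=
    Finset.card_filter_add_card_filter_not _
  have cardx : θ1.card + Ux.card = x.1 := by
    have := Finset.card_filter_add_card_filter_not
      (s := (Finset.univ : Finset (Fin x.1))) (p := fun i => ∃ l, (i, l) ∈ θ1)
    rw [card_matched_fst ha1, Finset.card_univ, Fintype.card_fin] at this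
    rw [hUx]; exact this
  have cardz1 : θ1.card + Uz1.card = z.1 := by
    have := Finset.card_filter_add_card_filter_not
      (s := (Finset.univ : Finset (Fin z.1))) (p := fun l => ∃ i, (i, l) ∈ θ1)
    rw [card_matched_snd ha1, Finset.card_univ, Fintype.card_fin] at this
    rw [hUz1]; exact this
  have cardz2 : θ2.card + Uz2.card = z.1 := by
    have := Finset.card_filter_add_card_filter_not
      (s := (Finset.univ : Finset (Fin z.1))) (p := fun l => ∃ j, (l, j) ∈ θ2)
    rw [card_matched_fst ha2, Finset.card_univ, Fintype.card_fin] at this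
    rw [hUz2]; exact this
  have cardy : θ2.card + Uy.card = y.1 := by
    have := Finset.card_filter_add_card_filter_not
      (s := (Finset.univ : Finset (Fin y.1))) (p := fun j => ∃ l, (l, j) ∈ θ2)
    rw [card_matched_snd ha2, Finset.card_univ, Fintype.card_fin] at this
    rw [hUy]; exact this
  have hB2le : B2.card ≤ Uz1.card := by
    refine Finset.card_le_card_of_injOn (fun a => a.1) ?_ ?_
    · intro a haB
      obtain ⟨haθ2, hno⟩ := Finset.mem_filter.mp haB
      exact Finset.mem_filter.mpr ⟨Finset.mem_univ _, hno⟩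
    · intro a haB b hbB e
      have haθ2 := (Finset.mem_filter.mp haB).1
      have hbθ2 := (Finset.mem_filter.mp hbB).1
      exact Prod.ext e ((ha2 a haθ2 b hbθ2).mp e)
  have hB1le : B1.card ≤ Uz2.card := by
    refine Finset.card_le_card_of_injOn (fun a => a.2) ?_ ?_
    · intro a haB
      obtain ⟨haθ1, hno⟩ := Finset.mem_filter.mp haB
      exact Finset.mem_filter.mpr ⟨Finset.mem_univ _, hno⟩
    · intro a haB b hbB e
      have haθ1 := (Finset.mem_filter.mp haB).1
      have hbθ1 := (Finset.mem_filter.mp hbB).1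
      exact Prod.ext ((ha1 a haθ1 b hbθ1).mpr e) e
  -- the index set and the three vectors
  set S := A.disjSum (B1.disjSum (B2.disjSum (Ux.disjSum Uy))) with hS
  set u : (Fin x.1 × Fin z.1 × Fin y.1) ⊕
      ((Fin x.1 × Fin z.1) ⊕ ((Fin z.1 × Fin y.1) ⊕ (Fin x.1 ⊕ Fin y.1))) → ℝ :=
    Sum.elim (fun t => dist (x.2 t.1) (y.2 t.2.2))
      (Sum.elim (fun _ => κ) (Sum.elim (fun _ => κ) (Sum.elim (fun _ => κ) (fun _ => κ))))
    with hu
  set fa : (Fin x.1 × Fin z.1 × Fin y.1) ⊕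
      ((Fin x.1 × Fin z.1) ⊕ ((Fin z.1 × Fin y.1) ⊕ (Fin x.1 ⊕ Fin y.1))) → ℝ :=
    Sum.elim (fun t => dist (x.2 t.1) (z.2 t.2.1))
      (Sum.elim (fun e => dist (x.2 e.1) (z.2 e.2))
        (Sum.elim (fun _ => κ) (Sum.elim (fun _ => κ) (fun _ => 0))))
    with hfa
  set fb : (Fin x.1 × Fin z.1 × Fin y.1) ⊕
      ((Fin x.1 × Fin z.1) ⊕ ((Fin z.1 × Fin y.1) ⊕ (Fin x.1 ⊕ Fin y.1))) → ℝ :=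
    Sum.elim (fun t => dist (z.2 t.2.1) (y.2 t.2.2))
      (Sum.elim (fun _ => κ)
        (Sum.elim (fun e => dist (z.2 e.1) (y.2 e.2)) (Sum.elim (fun _ => 0) (fun _ => κ))))
    with hfb
  have hu_nonneg : ∀ i, 0 ≤ u i := by
    rintro (t | (e | (e | (i | j)))) <;>
      simp [hu, dist_nonneg, hκ0]
  have hfa_nonneg : ∀ i, 0 ≤ fa i := by
    rintro (t | (e | (e | (i | j)))) <;>
      simp [hfa, dist_nonneg, hκ0]
  have hfb_nonneg : ∀ i, 0 ≤ fb i := by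
    rintro (t | (e | (e | (i | j)))) <;>
      simp [hfb, dist_nonneg, hκ0]
  have hab_le : ∀ i, u i ≤ fa i + fb i := by
    rintro (t | (e | (e | (i | j)))) <;>
      simp only [hu, hfa, hfb, Sum.elim_inl, Sum.elim_inr]
    · exact dist_triangle _ _ _
    · have := dist_nonneg (x := x.2 e.1) (y := z.2 e.2); linarith
    · have := dist_nonneg (x := z.2 e.1) (y := y.2 e.2); linarith
    · simp
    · simp
  -- the three sum identities
  have hSu : ∑ i ∈ S, u i ^ p
      = ∑ ij ∈ θ, dist (x.2 ij.1) (y.2 ij.2) ^ p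
        + c ^ p / 2 * ((x.1 : ℝ) + (y.1 : ℝ) - 2 * (θ.card : ℝ)) := by
    rw [hS, Finset.sum_disjSum, Finset.sum_disjSum, Finset.sum_disjSum,
      Finset.sum_disjSum]
    simp only [hu, Sum.elim_inl, Sum.elim_inr]
    rw [sumAθ]
    simp only [Finset.sum_const, nsmul_eq_mul, hκp]
    have ex : (x.1 : ℝ) = (A.card : ℝ) + B1.card + Ux.card := by
      have : (M1.card + B1.card) + Ux.card = x.1 := by rw [splitθ1card]; exact cardx
      rw [← cardAM1] at this
      exact_mod_cast this.symm
    have ey : (y.1 : ℝ) = (A.card : ℝ) + B2.card + Uy.card := by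
      have : (M2.card + B2.card) + Uy.card = y.1 := by rw [splitθ2card]; exact cardy
      rw [← cardAM2] at this
      exact_mod_cast this.symm
    have eθ : (θ.card : ℝ) = (A.card : ℝ) := by exact_mod_cast cardAθ.symm
    rw [ex, ey, eθ]
    ring
  have hSa : ∑ i ∈ S, fa i ^ p
      ≤ ∑ ij ∈ θ1, dist (x.2 ij.1) (z.2 ij.2) ^ p
        + c ^ p / 2 * ((x.1 : ℝ) + (z.1 : ℝ) - 2 * (θ1.card : ℝ)) := by
    rw [hS, Finset.sum_disjSum, Finset.sum_disjSum, Finset.sum_disjSum,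
      Finset.sum_disjSum]
    simp only [hfa, Sum.elim_inl, Sum.elim_inr]
    rw [sumAM1]
    simp only [Real.zero_rpow hp0.ne', Finset.sum_const, nsmul_eq_mul, smul_zero,
      mul_zero, add_zero, hκp]
    have hsum1 : ∑ a ∈ M1, dist (x.2 a.1) (z.2 a.2) ^ p
        + ∑ a ∈ B1, dist (x.2 a.1) (z.2 a.2) ^ p
        = ∑ ij ∈ θ1, dist (x.2 ij.1) (z.2 ij.2) ^ p :=
      Finset.sum_filter_add_sum_filter_not θ1 _ _
    have ez : (x.1 : ℝ) + (z.1 : ℝ) - 2 * (θ1.card : ℝ) = (Ux.card : ℝ) + Uz1.card := by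
      have e1 : (θ1.card : ℝ) + Ux.card = x.1 := by exact_mod_cast cardx
      have e2 : (θ1.card : ℝ) + Uz1.card = z.1 := by exact_mod_cast cardz1
      linarith
    have hle : (B2.card : ℝ) ≤ Uz1.card := by exact_mod_cast hB2le
    rw [ez]
    have : (B2.card : ℝ) * (c ^ p / 2) + (Ux.card : ℝ) * (c ^ p / 2)
        ≤ c ^ p / 2 * ((Ux.card : ℝ) + Uz1.card) := by nlinarith
    linarith [hsum1, this]
  have hSb : ∑ i ∈ S, fb i ^ p
      ≤ ∑ ij ∈ θ2, dist (z.2 ij.1) (y.2 ij.2) ^ p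
        + c ^ p / 2 * ((z.1 : ℝ) + (y.1 : ℝ) - 2 * (θ2.card : ℝ)) := by
    rw [hS, Finset.sum_disjSum, Finset.sum_disjSum, Finset.sum_disjSum,
      Finset.sum_disjSum]
    simp only [hfb, Sum.elim_inl, Sum.elim_inr]
    rw [sumAM2]
    simp only [Real.zero_rpow hp0.ne', Finset.sum_const, nsmul_eq_mul, smul_zero,
      mul_zero, zero_add, add_zero, hκp]
    have hsum2 : ∑ a ∈ M2, dist (z.2 a.1) (y.2 a.2) ^ p
        + ∑ a ∈ B2, dist (z.2 a.1) (y.2 a.2) ^ p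
        = ∑ ij ∈ θ2, dist (z.2 ij.1) (y.2 ij.2) ^ p :=
      Finset.sum_filter_add_sum_filter_not θ2 _ _
    have ez : (z.1 : ℝ) + (y.1 : ℝ) - 2 * (θ2.card : ℝ) = (Uz2.card : ℝ) + Uy.card := by
      have e1 : (θ2.card : ℝ) + Uz2.card = z.1 := by exact_mod_cast cardz2
      have e2 : (θ2.card : ℝ) + Uy.card = y.1 := by exact_mod_cast cardy
      linarith
    have hle : (B1.card : ℝ) ≤ Uz2.card := by exact_mod_cast hB1le
    rw [ez]
    have : (B1.card : ℝ) * (c ^ p / 2) + (Uy.card : ℝ) * (c ^ p / 2)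
        ≤ c ^ p / 2 * ((Uz2.card : ℝ) + Uy.card) := by nlinarith
    linarith [hsum2, this]
  -- put everything together
  have hcost_u : cost c p x y θ = (∑ i ∈ S, u i ^ p) ^ (1 / p) := by
    rw [cost, hSu]
  have step1 : cost c p x y θ ≤ (∑ i ∈ S, (fa i + fb i) ^ p) ^ (1 / p) := by
    rw [hcost_u]
    refine Real.rpow_le_rpow (Finset.sum_nonneg fun i _ => Real.rpow_nonneg (hu_nonneg i) p)
      (Finset.sum_le_sum fun i _ => Real.rpow_le_rpow (hu_nonneg i) (hab_le i) hp0.le)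
      (by positivity)
  have step2 : (∑ i ∈ S, (fa i + fb i) ^ p) ^ (1 / p)
      ≤ (∑ i ∈ S, fa i ^ p) ^ (1 / p) + (∑ i ∈ S, fb i ^ p) ^ (1 / p) :=
    Real.Lp_add_le_of_nonneg (f := fa) (g := fb) S hp (fun i _ => hfa_nonneg i) (fun i _ => hfb_nonneg i)
  have step3 : (∑ i ∈ S, fa i ^ p) ^ (1 / p) ≤ cost c p x z θ1 := by
    rw [cost]
    exact Real.rpow_le_rpow (Finset.sum_nonneg fun i _ => Real.rpow_nonneg (hfa_nonneg i) p)
      hSa (by positivity)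
  have step4 : (∑ i ∈ S, fb i ^ p) ^ (1 / p) ≤ cost c p z y θ2 := by
    rw [cost]
    exact Real.rpow_le_rpow (Finset.sum_nonneg fun i _ => Real.rpow_nonneg (hfb_nonneg i) p)
      hSb (by positivity)
  calc cost c p x y θ ≤ (∑ i ∈ S, (fa i + fb i) ^ p) ^ (1 / p) := step1
    _ ≤ (∑ i ∈ S, fa i ^ p) ^ (1 / p) + (∑ i ∈ S, fb i ^ p) ^ (1 / p) := step2
    _ ≤ cost c p x z θ1 + cost c p z y θ2 := add_le_add step3 step4

end TriangleAux

/-- There exists an ordered assignment set between `x` and `y` whose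
assignment cost is at most `d_SOSPA^{(c,p)}(x,z) + d_SOSPA^{(c,p)}(z,y)`. -/
theorem exists_orderedAssignment_cost_le {E : Type*} [MetricSpace E] (c p : ℝ)
    (hc : 0 < c) (hp : 1 ≤ p) (x y z : Polyline E) :
    ∃ θxy : Finset (Fin x.1 × Fin y.1), IsOrderedAssignment θxy ∧
      cost c p x y θxy ≤ dSOSPA c p x z + dSOSPA c p z y := by
  haveI : Nonempty {θ : Finset (Fin x.1 × Fin z.1) // IsOrderedAssignment θ} :=
    ⟨⟨∅, by intro a ha; simp at ha⟩⟩
  haveI : Nonempty {θ : Finset (Fin z.1 × Fin y.1) // IsOrderedAssignment θ} :=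
    ⟨⟨∅, by intro a ha; simp at ha⟩⟩
  obtain ⟨θ1, hθ1min⟩ := Finite.exists_min
    (fun θ : {θ : Finset (Fin x.1 × Fin z.1) // IsOrderedAssignment θ} => cost c p x z θ.1)
  obtain ⟨θ2, hθ2min⟩ := Finite.exists_min
    (fun θ : {θ : Finset (Fin z.1 × Fin y.1) // IsOrderedAssignment θ} => cost c p z y θ.1)
  have e1 : dSOSPA c p x z = cost c p x z θ1.1 :=
    le_antisymm (ciInf_le (Set.finite_range _).bddBelow θ1) (le_ciInf hθ1min)
  have e2 : dSOSPA c p z y = cost c p z y θ2.1 :=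
    le_antisymm (ciInf_le (Set.finite_range _).bddBelow θ2) (le_ciInf hθ2min)
  refine ⟨composeAssignment θ1.1 θ2.1, composeAssignment_ordered θ1.2 θ2.2, ?_⟩
  rw [e1, e2]
  exact cost_compose_le c p hc hp x y z θ1.1 θ1.2 θ2.1 θ2.2
end
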